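/- arXiv:1709.06037 — 2 statements merged into one kernel-verified Lean document; each statement's English description precedes it below -/
import Mathlib

section
/- Let ψ : [0,∞) → ℝ satisfy ψ(0) = 0 and be 1-, 2- and 3-alternating. Let R₁,…,R_d > 0 and let x = (x₁,…,x_d) ∈ ℝ^d with |xᵢ| ≤ Rᵢ for all i. Then 2^{−d} Σ_{A ⊆ {1,…,d}} [ ψ( Σ_{i∈A} (xᵢ − Rᵢ)² + Σ_{j∉A} (xⱼ + Rⱼ)² ) − (1/2) ψ( 4 Σ_{i∈A} Rᵢ² ) ] ≤ ψ(R₁² + ⋯ + R_d²). -/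
/-!
Each summand lives at a vertex of the box `∏ [-Rᵢ, Rᵢ]`. Coordinate by coordinate, monotonicity
and 2-alternation let us replace the pair of squared distances `(xᵢ - Rᵢ)², (xᵢ + Rᵢ)²` by the
more spread pair `Rᵢ², 3Rᵢ²`, which removes `x` altogether. Writing `σ = ∑_{i∈A} Rᵢ²` and
`τ = ∑_{i∉A} Rᵢ²`, the vertex `A` then contributes `ψ(σ + 3τ) - ψ(4σ)/2`, and pairing `A` with
its complement reduces the claim to the two-variable inequality
`2ψ(σ + 3τ) + 2ψ(τ + 3σ) ≤ 4ψ(σ + τ) + ψ(4σ) + ψ(4τ)`, which follows from 2- and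
3-alternation and `ψ 0 = 0`.
-/

/-- A function `f : [0,∞) → ℝ` (modeled as `ℝ → ℝ`, with all arguments nonnegative)
is `n`-alternating if `∑_{A ⊆ {1,…,n}} (−1)^{|A|} f(s + ∑_{i∈A} sᵢ) ≤ 0`
for all `s, s₁, …, sₙ ≥ 0`. -/
def NAlternating (n : ℕ) (f : ℝ → ℝ) : Prop :=
  ∀ s : ℝ, 0 ≤ s → ∀ t : Fin n → ℝ, (∀ i, 0 ≤ t i) →
    ∑ A : Finset (Fin n), (-1 : ℝ) ^ A.card * f (s + ∑ i ∈ A, t i) ≤ 0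

open Finset

namespace NAlternating

variable {ψ : ℝ → ℝ}

theorem monotoneOn (h : NAlternating 1 ψ) : MonotoneOn ψ (Set.Ici 0) := by
  intro a ha b _ hab
  have key := h a ha ![b - a] (by simpa using hab)
  rw [show (univ : Finset (Finset (Fin 1))) = {∅, {0}} by decide] at key
  simpa using key

theorem map_add_add_le (h : NAlternating 2 ψ) {s a b : ℝ} (hs : 0 ≤ s) (ha : 0 ≤ a)
    (hb : 0 ≤ b) : ψ s + ψ (s + a + b) ≤ ψ (s + a) + ψ (s + b) := by
  have key := h s hs ![a, b] (by simp [Fin.forall_fin_two, ha, hb])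
  rw [show (univ : Finset (Finset (Fin 2))) = {∅, {0}, {1}, {0, 1}} by decide] at key
  simp +decide [sum_insert, ← add_assoc] at key
  linarith

theorem map_add_add_add_le (h : NAlternating 3 ψ) {s a b c : ℝ} (hs : 0 ≤ s) (ha : 0 ≤ a)
    (hb : 0 ≤ b) (hc : 0 ≤ c) :
    ψ s + ψ (s + a + b) + ψ (s + a + c) + ψ (s + b + c)
      ≤ ψ (s + a) + ψ (s + b) + ψ (s + c) + ψ (s + a + b + c) := by
  have key := h s hs ![a, b, c] (by simp [Fin.forall_fin_succ, ha, hb, hc])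
  rw [show (univ : Finset (Finset (Fin 3))) =
    {∅, {0}, {1}, {2}, {0, 1}, {0, 2}, {1, 2}, {0, 1, 2}} by decide] at key
  simp +decide [sum_insert, ← add_assoc] at key
  linarith

theorem map_add_map_le_of_le (h1 : NAlternating 1 ψ) (h2 : NAlternating 2 ψ)
    {u v m T : ℝ} (hu : 0 ≤ u) (hum : u ≤ m) (hmv : m ≤ v) (hT : u + v ≤ m + T) :
    ψ u + ψ v ≤ ψ m + ψ T := by
  have conc := h2.map_add_add_le hu (sub_nonneg.2 hum) (sub_nonneg.2 hmv)
  have mono := h1.monotoneOn (Set.mem_Ici.2 (by linarith : 0 ≤ u + (v - m)))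
    (Set.mem_Ici.2 (by linarith : 0 ≤ T)) (by linarith)
  simp only [add_sub_cancel] at conc
  linarith

theorem map_sq_add_map_sq_le (h1 : NAlternating 1 ψ) (h2 : NAlternating 2 ψ)
    {c x r : ℝ} (hc : 0 ≤ c) (hx : |x| ≤ r) :
    ψ (c + (x - r) ^ 2) + ψ (c + (x + r) ^ 2) ≤ ψ (c + r ^ 2) + ψ (c + 3 * r ^ 2) := by
  wlog hx0 : 0 ≤ x generalizing x
  · have := this (x := -x) (by rwa [abs_neg]) (by linarith)
    rw [show (-x - r) ^ 2 = (x + r) ^ 2 by ring, show (-x + r) ^ 2 = (x - r) ^ 2 by ring] at this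
    linarith
  have hxr := (le_abs_self x).trans hx
  exact h1.map_add_map_le_of_le h2 (by positivity) (by nlinarith) (by nlinarith) (by nlinarith)

theorem two_mul_sub_le_sub (h2 : NAlternating 2 ψ) (h3 : NAlternating 3 ψ) {b ρ s : ℝ}
    (hb : 0 ≤ b) (hρ : 0 ≤ ρ) (hs : b + ρ ≤ s) :
    2 * (ψ (s + 2 * ρ) - ψ s) ≤ ψ (b + 4 * ρ) - ψ b := by
  -- 2-alternation moves the increment over `[s, s + 2ρ]` down to `[b + ρ, b + 3ρ]`; 3-alternation
  -- with steps `ρ, ρ, 2ρ` bounds twice the latter by the increment over `[b, b + 4ρ]`.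
  have conc := h2.map_add_add_le (s := b + ρ) (a := 2 * ρ) (b := s - (b + ρ)) (by linarith)
    (by linarith) (by linarith)
  have three := h3.map_add_add_add_le (s := b) (a := ρ) (b := ρ) (c := 2 * ρ) hb hρ hρ
    (by linarith)
  ring_nf at conc three ⊢
  linarith

theorem pair_le (hψ0 : ψ 0 = 0) (h2 : NAlternating 2 ψ) (h3 : NAlternating 3 ψ) {σ τ : ℝ}
    (hσ : 0 ≤ σ) (hτ : 0 ≤ τ) :
    2 * ψ (σ + 3 * τ) + 2 * ψ (τ + 3 * σ) ≤ 4 * ψ (σ + τ) + ψ (4 * σ) + ψ (4 * τ) := by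
  wlog hστ : σ ≤ τ generalizing σ τ
  · have := this hτ hσ (le_of_not_ge hστ)
    rw [add_comm τ σ] at this
    linarith
  have far := two_mul_sub_le_sub h2 h3 (b := 4 * σ) (ρ := τ - σ) (s := τ + 3 * σ) (by linarith)
    (by linarith) (by linarith)
  have near := two_mul_sub_le_sub h2 h3 (b := 0) (ρ := σ) (s := σ + τ) le_rfl hσ (by linarith)
  rw [hψ0] at near
  ring_nf at far near ⊢
  linarith

end NAlternating

theorem sum_le_card_mul_of_add_le {α : Type*} [Fintype α] {e : α → α}
    (he : Function.Involutive e) {F : α → ℝ} {c : ℝ} (h : ∀ a, F a + F (e a) ≤ 2 * c) :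
    ∑ a, F a ≤ Fintype.card α * c := by
  have hsum := sum_le_sum fun a (_ : a ∈ univ) => h a
  rw [sum_add_distrib, he.bijective.sum_comp F, ← mul_sum, sum_const, card_univ,
    nsmul_eq_mul] at hsum
  linarith

theorem sum_powerset_map_le {ι : Type*} [DecidableEq ι] {ψ : ℝ → ℝ} {f g f' g' : ι → ℝ}
    (hf : ∀ i, 0 ≤ f i) (hg : ∀ i, 0 ≤ g i) (hf' : ∀ i, 0 ≤ f' i) (hg' : ∀ i, 0 ≤ g' i)
    (s : Finset ι)
    (H : ∀ i ∈ s, ∀ c, 0 ≤ c → ψ (c + f i) + ψ (c + g i) ≤ ψ (c + f' i) + ψ (c + g' i))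
    {c : ℝ} (hc : 0 ≤ c) :
    ∑ A ∈ s.powerset, ψ (c + (∑ i ∈ A, f i + ∑ i ∈ s \ A, g i))
      ≤ ∑ A ∈ s.powerset, ψ (c + (∑ i ∈ A, f' i + ∑ i ∈ s \ A, g' i)) := by
  induction s using Finset.induction_on generalizing c with
  | empty => simp
  | insert a s ha ih =>
    have split : ∀ u v : ι → ℝ,
        ∑ A ∈ (insert a s).powerset, ψ (c + (∑ i ∈ A, u i + ∑ i ∈ insert a s \ A, v i))
          = ∑ A ∈ s.powerset, ψ (c + v a + (∑ i ∈ A, u i + ∑ i ∈ s \ A, v i))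
            + ∑ A ∈ s.powerset, ψ (c + u a + (∑ i ∈ A, u i + ∑ i ∈ s \ A, v i)) := by
      intro u v
      rw [sum_powerset_insert ha]
      congr 1 <;> refine sum_congr rfl fun A hA => ?_
      · have haA : a ∉ A := fun h => ha (mem_powerset.1 hA h)
        rw [insert_sdiff_of_notMem _ haA, sum_insert fun h => ha (mem_sdiff.1 h).1]
        ring_nf
      · rw [sum_insert fun h => ha (mem_powerset.1 hA h), insert_sdiff_insert,
          sdiff_insert_of_notMem ha]
        ring_nf
    have H' := fun i hi => H i (mem_insert_of_mem hi)
    rw [split, split]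
    calc _ ≤ ∑ A ∈ s.powerset, ψ (c + g a + (∑ i ∈ A, f' i + ∑ i ∈ s \ A, g' i))
            + ∑ A ∈ s.powerset, ψ (c + f a + (∑ i ∈ A, f' i + ∑ i ∈ s \ A, g' i)) :=
          add_le_add (ih H' (by linarith [hg a])) (ih H' (by linarith [hf a]))
      _ ≤ _ := by
        rw [← sum_add_distrib, ← sum_add_distrib]
        refine sum_le_sum fun A _ => ?_
        have hr : 0 ≤ ∑ i ∈ A, f' i + ∑ i ∈ s \ A, g' i :=
          add_nonneg (sum_nonneg fun i _ => hf' i) (sum_nonneg fun i _ => hg' i)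
        have key := H a (mem_insert_self a s) _ (add_nonneg hc hr)
        simp only [add_right_comm c _ (f _), add_right_comm c _ (g _), add_right_comm c _ (f' _),
          add_right_comm c _ (g' _)] at key
        linarith

theorem stmt_5_general (d : ℕ) (ψ : ℝ → ℝ) (hψ0 : ψ 0 = 0)
    (h1 : NAlternating 1 ψ) (h2 : NAlternating 2 ψ) (h3 : NAlternating 3 ψ)
    (R : Fin d → ℝ)
    (x : Fin d → ℝ) (hx : ∀ i, |x i| ≤ R i) :
    (1 / 2 ^ d : ℝ) * ∑ A : Finset (Fin d),
        (ψ ((∑ i ∈ A, (x i - R i) ^ 2) + ∑ j ∈ Aᶜ, (x j + R j) ^ 2)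
          - (1 / 2) * ψ (4 * ∑ i ∈ A, R i ^ 2))
      ≤ ψ (∑ i, R i ^ 2) := by
  have exchange : ∑ A : Finset (Fin d), ψ ((∑ i ∈ A, (x i - R i) ^ 2) + ∑ j ∈ Aᶜ, (x j + R j) ^ 2)
      ≤ ∑ A : Finset (Fin d), ψ (∑ i ∈ A, R i ^ 2 + 3 * ∑ i ∈ Aᶜ, R i ^ 2) := by
    simpa [← compl_eq_univ_sdiff, mul_sum] using
      sum_powerset_map_le (fun _ => sq_nonneg _) (fun _ => sq_nonneg _) (fun _ => sq_nonneg _)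
        (fun _ => by positivity) univ
        (fun i _ c hc => h1.map_sq_add_map_sq_le h2 hc (hx i)) le_rfl
  have pairing : ∑ A : Finset (Fin d),
      (ψ (∑ i ∈ A, R i ^ 2 + 3 * ∑ i ∈ Aᶜ, R i ^ 2) - (1 / 2) * ψ (4 * ∑ i ∈ A, R i ^ 2))
        ≤ 2 ^ d * ψ (∑ i, R i ^ 2) := by
    have key := sum_le_card_mul_of_add_le compl_involutive (c := ψ (∑ i, R i ^ 2))
      (F := fun A => ψ (∑ i ∈ A, R i ^ 2 + 3 * ∑ i ∈ Aᶜ, R i ^ 2)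
        - (1 / 2) * ψ (4 * ∑ i ∈ A, R i ^ 2)) fun A => by
      have := h2.pair_le hψ0 h3 (sum_nonneg fun i (_ : i ∈ A) => sq_nonneg (R i))
        (sum_nonneg fun i (_ : i ∈ Aᶜ) => sq_nonneg (R i))
      rw [compl_compl, ← sum_add_sum_compl A]
      linarith
    simpa using key
  rw [sum_sub_distrib] at pairing ⊢
  rw [div_mul_eq_mul_div, one_mul, div_le_iff₀ (by positivity)]
  linarith

theorem stmt_5 (d : ℕ) (ψ : ℝ → ℝ) (hψ0 : ψ 0 = 0)
    (h1 : NAlternating 1 ψ) (h2 : NAlternating 2 ψ) (h3 : NAlternating 3 ψ)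
    (R : Fin d → ℝ) (hR : ∀ i, 0 < R i)
    (x : Fin d → ℝ) (hx : ∀ i, |x i| ≤ R i) :
    (1 / 2 ^ d : ℝ) * ∑ A : Finset (Fin d),
        (ψ ((∑ i ∈ A, (x i - R i) ^ 2) + ∑ j ∈ Aᶜ, (x j + R j) ^ 2)
          - (1 / 2) * ψ (4 * ∑ i ∈ A, R i ^ 2))
      ≤ ψ (∑ i, R i ^ 2) :=
  stmt_5_general d ψ hψ0 h1 h2 h3 R x hx
end

section
/- Let ψ : [0,∞) → ℝ and suppose that γ : ℝ^d → ℝ defined by γ(h) = ψ(‖h‖²) is convex. Let R₁,…,R_d > 0, K = ∏_{i=1}^d [−Rᵢ, Rᵢ], and let v_A (A ⊆ {1,…,d}) be the vertices of K, with v_∅ = (−R₁,…,−R_d). Then for every x ∈ K, Σ_{A ⊆ {1,…,d}} γ(x − v_A) ≤ Σ_{A ⊆ {1,…,d}} γ(v_∅ − v_A). -/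
/-!
The box `∏ [-Rᵢ, Rᵢ]` is the product of the segments `[-Rᵢ, Rᵢ]`, hence the convex hull of its
vertices, so the convex function `F y = ∑_A γ (y - v_A)` attains its maximum over the box at some
vertex `v_B`. Flipping the signs of the coordinates in `B` is an isometry that permutes the vertices
(`v_A ↦ v_{A ∆ B}`) and sends `v_B` to `v_∅`; since `γ` is radial, `F (v_B) = F (v_∅)`.
-/

open Finset Set

theorem ConvexOn.sum {𝕜 E β ι : Type*} [Semiring 𝕜] [PartialOrder 𝕜] [AddCommMonoid E]
    [AddCommMonoid β] [PartialOrder β] [IsOrderedAddMonoid β] [SMul 𝕜 E] [Module 𝕜 β]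
    {s : Set E} (hs : Convex 𝕜 s) (t : Finset ι) {f : ι → E → β}
    (hf : ∀ i ∈ t, ConvexOn 𝕜 s (f i)) : ConvexOn 𝕜 s fun x => ∑ i ∈ t, f i x :=
  Finset.sum_fn t f ▸
    Finset.sum_induction f (ConvexOn 𝕜 s) (fun _ _ => ConvexOn.add) (convexOn_const 0 hs) hf

theorem EuclideanSpace.norm_eq_of_forall_abs_eq {ι : Type*} [Fintype ι]
    {x y : EuclideanSpace ℝ ι} (h : ∀ i, |x i| = |y i|) : ‖x‖ = ‖y‖ := by
  simp only [EuclideanSpace.norm_eq, Real.norm_eq_abs, h]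

section boxVertex

variable {ι : Type*} [DecidableEq ι]

def boxVertex (R : ι → ℝ) (A : Finset ι) : EuclideanSpace ℝ ι :=
  WithLp.toLp 2 fun i => if i ∈ A then R i else -R i

theorem boxVertex_apply (R : ι → ℝ) (A : Finset ι) (i : ι) :
    boxVertex R A i = if i ∈ A then R i else -R i :=
  rfl

theorem norm_boxVertex_sub_boxVertex [Fintype ι] (R : ι → ℝ) (A B : Finset ι) :
    ‖boxVertex R B - boxVertex R A‖ = ‖boxVertex R ∅ - boxVertex R (symmDiff A B)‖ := by
  refine EuclideanSpace.norm_eq_of_forall_abs_eq fun i => ?_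
  simp only [PiLp.sub_apply, boxVertex_apply, Finset.mem_symmDiff, Finset.notMem_empty]
  by_cases hA : i ∈ A <;> by_cases hB : i ∈ B <;> simp [hA, hB, abs_sub_comm]

theorem sum_comp_sub_boxVertex_eq [Fintype ι] {γ : EuclideanSpace ℝ ι → ℝ}
    (hγ : ∀ h h' : EuclideanSpace ℝ ι, ‖h‖ = ‖h'‖ → γ h = γ h') (R : ι → ℝ) (B : Finset ι) :
    ∑ A, γ (boxVertex R B - boxVertex R A) = ∑ A, γ (boxVertex R ∅ - boxVertex R A) := by
  have hinv : Function.Involutive fun A : Finset ι => symmDiff A B :=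
    fun A => symmDiff_symmDiff_cancel_right B A
  rw [← hinv.bijective.sum_comp fun A => γ (boxVertex R ∅ - boxVertex R A)]
  exact Finset.sum_congr rfl fun A _ => hγ _ _ (norm_boxVertex_sub_boxVertex R A B)

theorem mem_convexHull_range_boxVertex [Fintype ι] {R : ι → ℝ} {x : EuclideanSpace ℝ ι}
    (hx : ∀ i, |x i| ≤ R i) : x ∈ convexHull ℝ (range (boxVertex R)) := by
  have hbox : x.ofLp ∈ convexHull ℝ (univ.pi fun i => {-R i, R i}) := by
    rw [convexHull_pi]
    intro i _
    dsimp only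
    rw [convexHull_pair, segment_eq_Icc (by linarith [abs_nonneg (x i), hx i])]
    exact abs_le.mp (hx i)
  have hvert : WithLp.toLp 2 '' (univ.pi fun i => {-R i, R i}) ⊆ range (boxVertex R) := by
    rintro _ ⟨y, hy, rfl⟩
    refine ⟨univ.filter fun i => y i = R i, PiLp.ext fun i => ?_⟩
    simp only [boxVertex_apply, Finset.mem_filter, Finset.mem_univ, true_and]
    split_ifs with hyR
    · exact hyR.symm
    · exact ((hy i (mem_univ i)).resolve_right hyR).symm
  have himage := (WithLp.linearEquiv 2 ℝ (ι → ℝ)).symm.toLinearMap.image_convexHull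
    (univ.pi fun i => {-R i, R i})
  exact convexHull_mono hvert (himage.subset ⟨x.ofLp, hbox, rfl⟩)

end boxVertex

theorem stmt_15_general (d : ℕ) (ψ : ℝ → ℝ) (γ : EuclideanSpace ℝ (Fin d) → ℝ)
    (hγψ : ∀ h, γ h = ψ (‖h‖ ^ 2)) (hγconv : ConvexOn ℝ Set.univ γ)
    (R : Fin d → ℝ)
    (v : Finset (Fin d) → EuclideanSpace ℝ (Fin d))
    (hv : ∀ (A : Finset (Fin d)) (i : Fin d), v A i = if i ∈ A then R i else -R i) :
    ∀ x : EuclideanSpace ℝ (Fin d), (∀ i, |x i| ≤ R i) →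
      ∑ A : Finset (Fin d), γ (x - v A) ≤ ∑ A : Finset (Fin d), γ (v ∅ - v A) := by
  intro x hx
  obtain rfl : v = boxVertex R := funext fun A => PiLp.ext (hv A)
  have hF : ConvexOn ℝ univ fun y => ∑ A, γ (y - boxVertex R A) := by
    refine ConvexOn.sum convex_univ univ fun A _ => ?_
    simpa [sub_eq_add_neg, Function.comp_def] using hγconv.translate_left (-boxVertex R A)
  obtain ⟨_, ⟨B, rfl⟩, hB⟩ :=
    hF.exists_ge_of_mem_convexHull (subset_univ _) (mem_convexHull_range_boxVertex hx)
  exact hB.trans_eq <| sum_comp_sub_boxVertex_eq (fun h h' hh => by rw [hγψ, hγψ, hh]) R B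

theorem stmt_15 (d : ℕ) (ψ : ℝ → ℝ) (γ : EuclideanSpace ℝ (Fin d) → ℝ)
    (hγψ : ∀ h, γ h = ψ (‖h‖ ^ 2)) (hγconv : ConvexOn ℝ Set.univ γ)
    (R : Fin d → ℝ) (hR : ∀ i, 0 < R i)
    (v : Finset (Fin d) → EuclideanSpace ℝ (Fin d))
    (hv : ∀ (A : Finset (Fin d)) (i : Fin d), v A i = if i ∈ A then R i else -R i) :
    ∀ x : EuclideanSpace ℝ (Fin d), (∀ i, |x i| ≤ R i) →
      ∑ A : Finset (Fin d), γ (x - v A) ≤ ∑ A : Finset (Fin d), γ (v ∅ - v A) :=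
  stmt_15_general d ψ γ hγψ hγconv R v hv
end
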